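/- arXiv:1611.01225 — 4 statements merged into one kernel-verified Lean document; each statement's English description precedes it below -/
import Mathlib

section
/- There is no consensus method φ on rooted phylogenetic trees that simultaneously satisfies unanimity, anonymity, neutrality, and extension stability, even when restricted to profiles of exactly two trees. -/
/-- A (candidate) rooted phylogenetic tree, encoded by its set of clusters. -/
abbrev PTree : Type := Finset (Finset ℕ)

/-- Two clusters are nested: disjoint or one contained in the other. -/
abbrev Nested (C D : Finset ℕ) : Prop := C ∩ D = ∅ ∨ C ⊆ D ∨ D ⊆ C

/-- `H` is a hierarchy on leaf set `X`: a rooted phylogenetic tree in `RP(X)`. -/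
structure IsHierarchy (X : Finset ℕ) (H : PTree) : Prop where
  subset_top : ∀ C ∈ H, C ⊆ X
  cluster_nonempty : ∀ C ∈ H, C.Nonempty
  top_mem : X ∈ H
  singleton_mem : ∀ x ∈ X, ({x} : Finset ℕ) ∈ H
  laminar : ∀ C ∈ H, ∀ D ∈ H, Nested C D

/-- Restriction `T|_Y` of a tree to a subset `Y` of the leaves. -/
def restrictT (H : PTree) (Y : Finset ℕ) : PTree :=
  (H.image (fun C => C ∩ Y)).filter (fun C => C.Nonempty)

/-- A consensus method: for every leaf set and profile, an output tree. -/
abbrev ConsensusMethod : Type := Finset ℕ → List PTree → PTree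

/-- Relabel the leaves of a tree by `f`. -/
def relabelT (f : ℕ → ℕ) (H : PTree) : PTree := H.image (fun C => C.image f)

/-- A consensus method sends profiles of trees on `X` to a tree on `X`. -/
def ProducesHierarchy (φ : ConsensusMethod) : Prop :=
  ∀ (X : Finset ℕ) (P : List PTree), P ≠ [] → (∀ T ∈ P, IsHierarchy X T) →
    IsHierarchy X (φ X P)

/-- Unanimity: a constant profile yields that tree. -/
def Unanimity (φ : ConsensusMethod) : Prop :=
  ∀ (X : Finset ℕ) (T : PTree) (k : ℕ), k ≠ 0 → IsHierarchy X T →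
    φ X (List.replicate k T) = T

/-- Anonymity: invariance under reordering the profile. -/
def Anonymity (φ : ConsensusMethod) : Prop :=
  ∀ (X : Finset ℕ) (P P' : List PTree), (∀ T ∈ P, IsHierarchy X T) →
    P.Perm P' → φ X P = φ X P'

/-- Neutrality: equivariance under relabelling the leaves by a bijection. -/
def Neutrality (φ : ConsensusMethod) : Prop :=
  ∀ (X : Finset ℕ) (P : List PTree) (e : ℕ ≃ ℕ), (∀ T ∈ P, IsHierarchy X T) →
    φ (X.image e) (P.map (relabelT e)) = relabelT e (φ X P)

/-- Extension stability: `φ(P|_Y) ⪯ φ(P)|_Y` (every cluster of the consensus of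
the restricted profile is a cluster of the restriction of the consensus). -/
def ExtensionStable (φ : ConsensusMethod) : Prop :=
  ∀ (X : Finset ℕ) (P : List PTree) (Y : Finset ℕ), (∀ T ∈ P, IsHierarchy X T) →
    Y ⊆ X → Y.Nonempty →
    φ Y (P.map (fun T => restrictT T Y)) ⊆ restrictT (φ X P) Y

/-- Extension stability restricted to profiles of exactly two trees. -/
def ExtensionStableOnPairs (φ : ConsensusMethod) : Prop :=
  ∀ (X : Finset ℕ) (T1 T2 : PTree) (Y : Finset ℕ),
    IsHierarchy X T1 → IsHierarchy X T2 → Y ⊆ X → Y.Nonempty →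
    φ Y [restrictT T1 Y, restrictT T2 Y] ⊆ restrictT (φ X [T1, T2]) Y

/-!
Take the caterpillars `tree₁ = 1|2|3|(4,5)` and `tree₂ = 3|4|1|(2,5)` on `{1,…,5}`. For each
leaf `i ≠ 5`, the restricted profile on `{1,…,5} \ {i}` is a relabelling of the one on
`{1,2,3,5}`, possibly with the two trees swapped, so by neutrality and anonymity `φ` returns
corresponding trees on these four leaf sets. Both trees restrict to the cherry `{2,5}` on
`{1,2,5}`, so unanimity and extension stability give a cluster `u` of `φ` on `{1,2,3,5}` with
`u ∩ {1,2,5} = {2,5}`, i.e. `u = {2,5}` or `u = {2,3,5}`. Transporting `u` to the other leaf sets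
and lifting by extension stability yields two overlapping clusters of `φ(tree₁, tree₂)`:
`{2,3,5}` on `{1,2,3,5}` against `{1,4,5}` on `{1,3,4,5}`, or `{2,5}` on `{1,2,4,5}` against
`{4,5}` on `{2,3,4,5}`.
-/

theorem mem_restrictT {H : PTree} {Y A : Finset ℕ} :
    A ∈ restrictT H Y ↔ (∃ C ∈ H, C ∩ Y = A) ∧ A.Nonempty := by
  simp [restrictT]

theorem restrictT_restrictT {H : PTree} {Y Z : Finset ℕ} (hZ : Z ⊆ Y) :
    restrictT (restrictT H Y) Z = restrictT H Z := by
  have hYZ : Y ∩ Z = Z := Finset.inter_eq_right.2 hZ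
  ext A
  simp only [mem_restrictT]
  constructor
  · rintro ⟨⟨_, ⟨⟨C, hC, rfl⟩, -⟩, rfl⟩, hA⟩
    exact ⟨⟨C, hC, by rw [Finset.inter_assoc, hYZ]⟩, hA⟩
  · rintro ⟨⟨C, hC, rfl⟩, hA⟩
    refine ⟨⟨C ∩ Y, ⟨⟨C, hC, rfl⟩, hA.mono ?_⟩, by rw [Finset.inter_assoc, hYZ]⟩, hA⟩
    exact Finset.inter_subset_inter_left hZ

theorem Nested.inter {C D : Finset ℕ} (h : Nested C D) (Y : Finset ℕ) :
    Nested (C ∩ Y) (D ∩ Y) := by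
  rcases h with h | h | h
  · left
    grind
  · exact Or.inr (Or.inl (Finset.inter_subset_inter_right h))
  · exact Or.inr (Or.inr (Finset.inter_subset_inter_right h))

theorem IsHierarchy.restrict {X Y : Finset ℕ} {H : PTree} (hH : IsHierarchy X H)
    (hYX : Y ⊆ X) (hY : Y.Nonempty) : IsHierarchy Y (restrictT H Y) where
  subset_top A hA := by
    obtain ⟨⟨C, -, rfl⟩, -⟩ := mem_restrictT.1 hA
    exact Finset.inter_subset_right
  cluster_nonempty _ hA := (mem_restrictT.1 hA).2
  top_mem := mem_restrictT.2 ⟨⟨X, hH.top_mem, Finset.inter_eq_right.2 hYX⟩, hY⟩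
  singleton_mem x hx :=
    mem_restrictT.2 ⟨⟨{x}, hH.singleton_mem x (hYX hx), by simp [hx]⟩, by simp⟩
  laminar := by
    rintro _ hA _ hB
    obtain ⟨⟨C, hC, rfl⟩, -⟩ := mem_restrictT.1 hA
    obtain ⟨⟨D, hD, rfl⟩, -⟩ := mem_restrictT.1 hB
    exact (hH.laminar C hC D hD).inter Y

theorem not_nested_of_inter_eq {C D Y Y' A B : Finset ℕ} (hC : C ∩ Y = A) (hD : D ∩ Y' = B)
    {x y z : ℕ} (hx : x ∈ A ∩ B) (hy : y ∈ (A ∩ Y') \ B) (hz : z ∈ (B ∩ Y) \ A) :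
    ¬ Nested C D := by
  subst hC hD
  simp only [Finset.mem_inter, Finset.mem_sdiff] at hx hy hz
  rintro (h | h | h)
  · simpa [h] using Finset.mem_inter.2 ⟨hx.1.1, hx.2.1⟩
  · exact hy.2 ⟨h hy.1.1.1, hy.1.2⟩
  · exact hz.2 ⟨h hz.1.1.1, hz.1.2⟩

section ConsensusAxioms

variable {φ : ConsensusMethod}

theorem ExtensionStableOnPairs.exists_inter_eq (hφ : ExtensionStableOnPairs φ)
    {X Y : Finset ℕ} {T₁ T₂ : PTree} (h₁ : IsHierarchy X T₁) (h₂ : IsHierarchy X T₂)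
    (hYX : Y ⊆ X) (hY : Y.Nonempty) {v : Finset ℕ}
    (hv : v ∈ φ Y [restrictT T₁ Y, restrictT T₂ Y]) : ∃ C ∈ φ X [T₁, T₂], C ∩ Y = v :=
  (mem_restrictT.1 (hφ X T₁ T₂ Y h₁ h₂ hYX hY hv)).1

theorem Anonymity.pair_comm (hφ : Anonymity φ) {X : Finset ℕ} {S₁ S₂ : PTree}
    (h₁ : IsHierarchy X S₁) (h₂ : IsHierarchy X S₂) : φ X [S₁, S₂] = φ X [S₂, S₁] :=
  hφ X _ _ (by simp [h₁, h₂]) (List.Perm.swap _ _ _)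

theorem Neutrality.image_mem_pair (hφ : Neutrality φ) {X X' : Finset ℕ}
    {S₁ S₂ S₁' S₂' : PTree} (h₁ : IsHierarchy X S₁) (h₂ : IsHierarchy X S₂) (e : ℕ ≃ ℕ)
    (hX : X.image e = X') (he₁ : relabelT e S₁ = S₁') (he₂ : relabelT e S₂ = S₂')
    {v : Finset ℕ} (hv : v ∈ φ X [S₁, S₂]) : v.image e ∈ φ X' [S₁', S₂'] := by
  have h := hφ X [S₁, S₂] e (by simp [h₁, h₂])
  simp only [List.map_cons, List.map_nil, hX, he₁, he₂] at h
  exact h ▸ Finset.mem_image_of_mem _ hv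

end ConsensusAxioms

def leaves : Finset ℕ := {1, 2, 3, 4, 5}

def tree₁ : PTree := {{1}, {2}, {3}, {4}, {5}, {4, 5}, {3, 4, 5}, {2, 3, 4, 5}, {1, 2, 3, 4, 5}}

def tree₂ : PTree := {{1}, {2}, {3}, {4}, {5}, {2, 5}, {1, 2, 5}, {1, 2, 4, 5}, {1, 2, 3, 4, 5}}

theorem isHierarchy_tree₁ : IsHierarchy leaves tree₁ :=
  ⟨by decide, by decide, by decide, by decide, by decide⟩

theorem isHierarchy_tree₂ : IsHierarchy leaves tree₂ :=
  ⟨by decide, by decide, by decide, by decide, by decide⟩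

theorem exists_cluster_extending_cherry {φ : ConsensusMethod} (hProd : ProducesHierarchy φ)
    (hUna : Unanimity φ) (hExt : ExtensionStableOnPairs φ) :
    ∃ u ∈ φ (leaves.erase 4)
        [restrictT tree₁ (leaves.erase 4), restrictT tree₂ (leaves.erase 4)],
      u = {2, 5} ∨ u = {2, 3, 5} := by
  set Y := leaves.erase 4
  set Z : Finset ℕ := {1, 2, 5}
  have hY : Y ⊆ leaves := Finset.erase_subset _ _
  have hZ : Z ⊆ Y := by decide
  have h₁ := isHierarchy_tree₁.restrict hY (by decide)
  have h₂ := isHierarchy_tree₂.restrict hY (by decide)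
  have hagree : restrictT tree₂ Z = restrictT tree₁ Z := by decide
  have hcherry :
      {2, 5} ∈ φ Z [restrictT (restrictT tree₁ Y) Z, restrictT (restrictT tree₂ Y) Z] := by
    have hconst : φ Z [restrictT tree₁ Z, restrictT tree₁ Z] = restrictT tree₁ Z :=
      hUna Z _ 2 two_ne_zero (isHierarchy_tree₁.restrict (hZ.trans hY) (by decide))
    rw [restrictT_restrictT hZ, restrictT_restrictT hZ, hagree, hconst]
    decide
  obtain ⟨u, hu, hu_inter⟩ := hExt.exists_inter_eq h₁ h₂ hZ (by decide) hcherry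
  have hu_sub : u ∈ Y.powerset :=
    Finset.mem_powerset.2 ((hProd Y _ (by simp) (by simp [h₁, h₂])).subset_top u hu)
  have hcases : ∀ u ∈ Y.powerset, u ∩ Z = {2, 5} → u = {2, 5} ∨ u = {2, 3, 5} := by decide
  exact ⟨u, hu, hcases u hu_sub hu_inter⟩

/-- **No-go theorem**: no consensus method satisfies unanimity, anonymity,
neutrality and extension stability, even just on profiles of two trees. -/
theorem no_regular_extension_stable_consensus :
    ¬ ∃ φ : ConsensusMethod, ProducesHierarchy φ ∧ Unanimity φ ∧ Anonymity φ ∧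
      Neutrality φ ∧ ExtensionStableOnPairs φ := by
  rintro ⟨φ, hProd, hUna, hAno, hNeu, hExt⟩
  have hH : IsHierarchy leaves (φ leaves [tree₁, tree₂]) :=
    hProd _ _ (by simp) (by simp [isHierarchy_tree₁, isHierarchy_tree₂])
  have lift : ∀ i, ∀ v ∈ φ (leaves.erase i)
      [restrictT tree₁ (leaves.erase i), restrictT tree₂ (leaves.erase i)],
      ∃ C ∈ φ leaves [tree₁, tree₂], C ∩ leaves.erase i = v := fun _ _ hv =>
    hExt.exists_inter_eq isHierarchy_tree₁ isHierarchy_tree₂ (Finset.erase_subset _ _)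
      (Finset.one_lt_card_iff_nontrivial.1 (by decide)).erase_nonempty hv
  have h₁ := isHierarchy_tree₁.restrict (Finset.erase_subset 4 leaves) (by decide)
  have h₂ := isHierarchy_tree₂.restrict (Finset.erase_subset 4 leaves) (by decide)
  obtain ⟨u, hu, rfl | rfl⟩ := exists_cluster_extending_cherry hProd hUna hExt
  · obtain ⟨C, hC, hCu⟩ := lift 3 _ <|
      hNeu.image_mem_pair h₁ h₂ (Equiv.swap 3 4) (by decide) (by decide) (by decide) hu
    obtain ⟨D, hD, hDu⟩ := lift 1 _ <|
      hNeu.image_mem_pair h₂ h₁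
        ((Equiv.swap 3 2).trans ((Equiv.swap 1 3).trans (Equiv.swap 1 4)))
        (by decide) (by decide) (by decide) (hAno.pair_comm h₁ h₂ ▸ hu)
    exact not_nested_of_inter_eq hCu hDu (x := 5) (y := 2) (z := 4) (by decide) (by decide)
      (by decide) (hH.laminar C hC D hD)
  · obtain ⟨C, hC, hCu⟩ := lift 4 _ hu
    obtain ⟨D, hD, hDu⟩ := lift 2 _ <|
      hNeu.image_mem_pair h₂ h₁ ((Equiv.swap 1 3).trans (Equiv.swap 2 4))
        (by decide) (by decide) (by decide) (hAno.pair_comm h₁ h₂ ▸ hu)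
    exact not_nested_of_inter_eq hCu hDu (x := 5) (y := 3) (z := 1) (by decide) (by decide)
      (by decide) (hH.laminar C hC D hD)
end

section
/- Majority rule consensus satisfies the invariance property φ(P · φ(P)) = φ(P): for any profile P of rooted phylogenetic trees on X, appending the majority rule consensus tree to P does not change the majority rule consensus. -/
/-- Majority rule consensus on leaf set `X`: the clusters are the subsets of `X`
appearing as clusters in strictly more than half of the trees of the profile. -/
def majC (X : Finset ℕ) (P : List PTree) : PTree :=
  X.powerset.filter (fun A => P.length < 2 * P.countP (fun T => decide (A ∈ T)))

theorem List.strictMajority_append_singleton_iff {α : Type*} (p : α → Bool) (l : List α) (a : α)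
    (ha : p a ↔ l.length < 2 * l.countP p) :
    (l ++ [a]).length < 2 * (l ++ [a]).countP p ↔ l.length < 2 * l.countP p := by
  rw [List.length_append, List.countP_append, List.countP_singleton, List.length_singleton]
  by_cases hmaj : l.length < 2 * l.countP p
  · simp only [ha.mpr hmaj, if_true]
    omega
  · simp only [mt ha.mp hmaj, Bool.false_eq_true, if_false]
    omega

theorem mem_majC {X A : Finset ℕ} {P : List PTree} :
    A ∈ majC X P ↔ A ⊆ X ∧ P.length < 2 * P.countP (fun T => decide (A ∈ T)) := by
  rw [majC, Finset.mem_filter, Finset.mem_powerset]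

theorem majority_invariance_general (X : Finset ℕ) (P : List PTree) :
    majC X (P ++ [majC X P]) = majC X P := by
  ext A
  rw [mem_majC, mem_majC]
  refine and_congr_right fun hAX => List.strictMajority_append_singleton_iff _ _ _ ?_
  simp [mem_majC, hAX]

/-- Invariance of majority rule: appending the majority rule consensus tree to
the profile does not change the majority rule consensus. -/
theorem majority_invariance (X : Finset ℕ) (P : List PTree)
    (hP : P ≠ []) (hh : ∀ T ∈ P, IsHierarchy X T) :
    majC X (P ++ [majC X P]) = majC X P :=
  majority_invariance_general X P
end

section
/- If φ is a consensus method satisfying unanimity, anonymity, and associative stability, then φ(P) depends only on the set of distinct trees appearing in the profile P, not on their multiplicities or order. Equivalently, if profiles P and P' (of possibly different lengths) contain exactly the same set of distinct trees, then φ(P) = φ(P'). -/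
/-!
Associative stability makes `φ (Q ++ R)` depend on `Q` only through `φ Q`. Since unanimity gives
`φ [T, T] = φ [T]`, anonymity then lets a tree already in the profile be appended without changing
the consensus. Hence `φ P = φ (P ++ P') = φ (P' ++ P) = φ P'` when `P` and `P'` have the same trees.
-/

namespace Consensus

variable {α : Type*}

-- `S` plays the role of `RP(X)`: the axioms are only imposed on profiles of trees satisfying `S`.
def Unanimous (S : α → Prop) (φ : List α → α) : Prop :=
  ∀ (T : α) (k : ℕ), k ≠ 0 → S T → φ (List.replicate k T) = T

def Anonymous (S : α → Prop) (φ : List α → α) : Prop :=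
  ∀ P P' : List α, (∀ T ∈ P, S T) → P.Perm P' → φ P = φ P'

def AssocStable (S : α → Prop) (φ : List α → α) : Prop :=
  ∀ (P : List α) (T : α), P ≠ [] → (∀ T' ∈ P, S T') → S T → φ (P ++ [T]) = φ [φ P, T]

variable {S : α → Prop} {φ : List α → α}

theorem AssocStable.append_congr (hAS : AssocStable S φ) {Q Q' : List α} (hQ : Q ≠ [])
    (hQ' : Q' ≠ []) (hQS : ∀ T ∈ Q, S T) (hQ'S : ∀ T ∈ Q', S T) (h : φ Q = φ Q') :
    ∀ {R : List α}, (∀ T ∈ R, S T) → φ (Q ++ R) = φ (Q' ++ R) := by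
  intro R
  induction R using List.reverseRecOn with
  | nil => simpa using h
  | append_singleton R a ih =>
    intro hRS
    simp only [List.forall_mem_append, List.forall_mem_singleton] at hRS
    simp only [← List.append_assoc]
    rw [hAS _ a (by simp [hQ]) (List.forall_mem_append.2 ⟨hQS, hRS.1⟩) hRS.2,
      hAS _ a (by simp [hQ']) (List.forall_mem_append.2 ⟨hQ'S, hRS.1⟩) hRS.2, ih hRS.1]

theorem append_singleton_eq_of_mem (hU : Unanimous S φ) (hA : Anonymous S φ)
    (hAS : AssocStable S φ) {Q : List α} {T : α} (hQS : ∀ T' ∈ Q, S T') (hT : T ∈ Q) :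
    φ (Q ++ [T]) = φ Q := by
  obtain ⟨s, t, rfl⟩ := List.append_of_mem hT
  have hTS : S T := hQS T hT
  have hperm : (s ++ T :: t).Perm ([T] ++ (s ++ t)) := List.perm_middle
  have hRS : ∀ T' ∈ s ++ t, S T' :=
    fun T' h => hQS T' (hperm.symm.subset (List.mem_append_right _ h))
  have hTT : φ [T, T] = φ [T] := by
    change φ (List.replicate 2 T) = φ (List.replicate 1 T)
    rw [hU T 2 two_ne_zero hTS, hU T 1 one_ne_zero hTS]
  calc φ (s ++ T :: t ++ [T]) = φ ([T, T] ++ (s ++ t)) :=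
        hA _ _ (List.forall_mem_append.2 ⟨hQS, by simpa using hTS⟩)
          ((hperm.append_right [T]).trans ((List.perm_append_singleton T _).cons T))
    _ = φ ([T] ++ (s ++ t)) :=
        hAS.append_congr (by simp) (by simp) (by simpa using hTS) (by simpa using hTS) hTT hRS
    _ = φ (s ++ T :: t) := hA _ _ (List.forall_mem_append.2 ⟨by simpa using hTS, hRS⟩) hperm.symm

theorem append_eq_of_forall_mem (hU : Unanimous S φ) (hA : Anonymous S φ)
    (hAS : AssocStable S φ) {Q : List α} (hQS : ∀ T ∈ Q, S T) :
    ∀ {R : List α}, (∀ T ∈ R, T ∈ Q) → φ (Q ++ R) = φ Q := by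
  intro R
  induction R using List.reverseRecOn with
  | nil => simp
  | append_singleton R a ih =>
    intro hR
    simp only [List.forall_mem_append, List.forall_mem_singleton] at hR
    rw [← List.append_assoc, append_singleton_eq_of_mem hU hA hAS
      (List.forall_mem_append.2 ⟨hQS, fun T h => hQS T (hR.1 T h)⟩) (by simp [hR.2]), ih hR.1]

theorem eq_of_mem_iff (hU : Unanimous S φ) (hA : Anonymous S φ)
    (hAS : AssocStable S φ) {P P' : List α} (hPS : ∀ T ∈ P, S T) (hsame : ∀ T, T ∈ P ↔ T ∈ P') :
    φ P = φ P' := by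
  have hP'S : ∀ T ∈ P', S T := fun T h => hPS T ((hsame T).2 h)
  calc φ P = φ (P ++ P') :=
        (append_eq_of_forall_mem hU hA hAS hPS fun T h => (hsame T).2 h).symm
    _ = φ (P' ++ P) := hA _ _ (List.forall_mem_append.2 ⟨hPS, hP'S⟩) List.perm_append_comm
    _ = φ P' := append_eq_of_forall_mem hU hA hAS hP'S fun T h => (hsame T).1 h

end Consensus

theorem assoc_stable_ignores_multiplicities_general (X : Finset ℕ)
    (φ : List PTree → PTree)
    (hU : ∀ (T : PTree) (k : ℕ), k ≠ 0 → IsHierarchy X T →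
      φ (List.replicate k T) = T)
    (hA : ∀ P P' : List PTree, (∀ T ∈ P, IsHierarchy X T) → P.Perm P' →
      φ P = φ P')
    (hAS : ∀ (P : List PTree) (T : PTree), P ≠ [] →
      (∀ T' ∈ P, IsHierarchy X T') → IsHierarchy X T →
      φ (P ++ [T]) = φ [φ P, T])
    (P P' : List PTree)
    (h1 : ∀ T ∈ P, IsHierarchy X T)
    (hsame : ∀ T : PTree, T ∈ P ↔ T ∈ P') :
    φ P = φ P' :=
  Consensus.eq_of_mem_iff hU hA hAS h1 hsame

/-- A unanimous, anonymous, associatively stable consensus method (on a fixed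
leaf set `X`) depends only on the set of distinct trees in the profile. -/
theorem assoc_stable_ignores_multiplicities (X : Finset ℕ)
    (φ : List PTree → PTree)
    (hcl : ∀ P, P ≠ [] → (∀ T ∈ P, IsHierarchy X T) → IsHierarchy X (φ P))
    (hU : ∀ (T : PTree) (k : ℕ), k ≠ 0 → IsHierarchy X T →
      φ (List.replicate k T) = T)
    (hA : ∀ P P' : List PTree, (∀ T ∈ P, IsHierarchy X T) → P.Perm P' →
      φ P = φ P')
    (hAS : ∀ (P : List PTree) (T : PTree), P ≠ [] →
      (∀ T' ∈ P, IsHierarchy X T') → IsHierarchy X T →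
      φ (P ++ [T]) = φ [φ P, T])
    (P P' : List PTree) (hP : P ≠ []) (hP' : P' ≠ [])
    (h1 : ∀ T ∈ P, IsHierarchy X T) (h2 : ∀ T ∈ P', IsHierarchy X T)
    (hsame : ∀ T : PTree, T ∈ P ↔ T ∈ P') :
    φ P = φ P' :=
  assoc_stable_ignores_multiplicities_general X φ hU hA hAS P P' h1 hsame
end

section
/- Loose consensus is not associatively stable: for the profile P = (ab|c, ac|b, bc|a) of three rooted triples on leaf set {a,b,c}, the set {b,c} is a cluster of φ_loose(φ_loose(ab|c, ac|b), bc|a) but not a cluster of φ_loose(P). -/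
/-- The rooted triple tree `xy|z`: nontrivial cluster `{x,y}` on leaf set `{x,y,z}`. -/
def tripleTree (x y z : ℕ) : PTree := {{x}, {y}, {z}, {x, y}, {x, y, z}}

/-- `A` is compatible with tree `T` if it is nested with every cluster of `T`. -/
abbrev Compat (A : Finset ℕ) (T : PTree) : Prop := ∀ C ∈ T, Nested A C

/-- All clusters occurring in some tree of the profile. -/
def allClusters (P : List PTree) : PTree := P.foldr (· ∪ ·) ∅

/-- Loose consensus: the clusters occurring in at least one input tree that are
compatible with every input tree. -/
def looseC (P : List PTree) : PTree :=
  (allClusters P).filter (fun A => ∀ T ∈ P, Compat A T)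

/-!
The clusters `{a,b}` of `ab|c` and `{a,c}` of `ac|b` overlap, so neither survives in
`φ_loose(ab|c, ac|b)`, which is therefore the star tree on `{a,b,c}`. The cluster `{b,c}` is
compatible with the star tree and with `bc|a`, hence kept at the second step; but it overlaps
`{a,b}`, so it is discarded when all three triples are combined at once.
-/

theorem not_nested_pair_pair {x y z : ℕ} (hxy : x ≠ y) (hxz : x ≠ z) (hyz : y ≠ z) :
    ¬ Nested ({x, y} : Finset ℕ) {x, z} := by
  rintro (h | h | h)
  · simpa [h] using (show x ∈ ({x, y} : Finset ℕ) ∩ {x, z} by simp)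
  · simpa [hxy.symm, hyz] using h (show y ∈ ({x, y} : Finset ℕ) by simp)
  · simpa [hxz.symm, hyz.symm] using h (show z ∈ ({x, z} : Finset ℕ) by simp)

theorem Compat.mono {A : Finset ℕ} {T T' : PTree} (hA : Compat A T) (hT' : T' ⊆ T) :
    Compat A T' :=
  fun C hC => hA C (hT' hC)

theorem mem_allClusters {A : Finset ℕ} {P : List PTree} :
    A ∈ allClusters P ↔ ∃ T ∈ P, A ∈ T := by
  induction P with
  | nil => simp [allClusters]
  | cons T P ih => simp [allClusters, ← ih]

theorem mem_looseC {A : Finset ℕ} {P : List PTree} :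
    A ∈ looseC P ↔ (∃ T ∈ P, A ∈ T) ∧ ∀ T ∈ P, Compat A T := by
  rw [looseC, Finset.mem_filter, mem_allClusters]

theorem notMem_looseC_of_not_compat {A : Finset ℕ} {P : List PTree} {T : PTree} (hT : T ∈ P)
    (hA : ¬ Compat A T) : A ∉ looseC P :=
  fun h => hA (mem_looseC.1 h |>.2 T hT)

theorem compat_pair_tripleTree {x y z : ℕ} (hzx : z ≠ x) (hzy : z ≠ y) :
    Compat {x, y} (tripleTree x y z) := by
  intro C hC
  simp only [tripleTree, Finset.mem_insert, Finset.mem_singleton] at hC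
  rcases hC with rfl | rfl | rfl | rfl | rfl
  · exact .inr (.inr (by simp))
  · exact .inr (.inr (by simp))
  · exact .inl (by simp [hzx, hzy])
  · exact .inr (.inl subset_rfl)
  · exact .inr (.inl (by simp))

theorem not_compat_tripleTree {x y z : ℕ} (hxy : x ≠ y) (hxz : x ≠ z) (hyz : y ≠ z) :
    ¬ Compat {y, z} (tripleTree x y z) := fun h =>
  not_nested_pair_pair hyz hxy.symm hxz.symm
    (Finset.pair_comm x y ▸ h {x, y} (by simp [tripleTree]))

def starTree (x y z : ℕ) : PTree := {{x}, {y}, {z}, {x, y, z}}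

theorem compat_pair_starTree {x y z : ℕ} (hxy : x ≠ y) (hxz : x ≠ z) :
    Compat {y, z} (starTree x y z) := by
  intro C hC
  simp only [starTree, Finset.mem_insert, Finset.mem_singleton] at hC
  rcases hC with rfl | rfl | rfl | rfl
  · exact .inl (by simp [hxy, hxz])
  · exact .inr (.inr (by simp))
  · exact .inr (.inr (by simp))
  · exact .inr (.inl (by simp))

theorem looseC_tripleTree_subset_starTree {x y z : ℕ} (hxy : x ≠ y) (hxz : x ≠ z)
    (hyz : y ≠ z) : looseC [tripleTree x y z, tripleTree x z y] ⊆ starTree x y z := by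
  intro C hC
  obtain ⟨⟨T, hT, hCT⟩, hC⟩ := mem_looseC.1 hC
  have hxz_mem : ({x, z} : Finset ℕ) ∈ tripleTree x z y := by simp [tripleTree]
  have hxy_mem : ({x, y} : Finset ℕ) ∈ tripleTree x y z := by simp [tripleTree]
  simp only [List.mem_cons, List.not_mem_nil, or_false] at hT
  rcases hT with rfl | rfl <;>
    simp only [tripleTree, Finset.mem_insert, Finset.mem_singleton] at hCT <;>
    rcases hCT with rfl | rfl | rfl | rfl | rfl
  all_goals first
    | exact absurd (hC _ (by simp) _ hxz_mem) (not_nested_pair_pair hxy hxz hyz)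
    | exact absurd (hC _ (by simp) _ hxy_mem) (not_nested_pair_pair hxz hxy hyz.symm)
    | simp [starTree, Finset.pair_comm]

/-- Loose consensus is not associatively stable: on the profile
`(ab|c, ac|b, bc|a)`, the set `{b,c}` is a cluster of
`φ_loose(φ_loose(ab|c, ac|b), bc|a)` but not of `φ_loose` of the whole profile. -/
theorem loose_not_assoc_stable (a b c : ℕ) (hab : a ≠ b) (hac : a ≠ c) (hbc : b ≠ c) :
    ({b, c} : Finset ℕ) ∈
        looseC [looseC [tripleTree a b c, tripleTree a c b], tripleTree b c a] ∧
      ({b, c} : Finset ℕ) ∉ looseC [tripleTree a b c, tripleTree a c b, tripleTree b c a] := by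
  refine ⟨mem_looseC.2 ⟨⟨tripleTree b c a, by simp, by simp [tripleTree]⟩, ?_⟩,
    notMem_looseC_of_not_compat (by simp) (not_compat_tripleTree hab hac hbc)⟩
  simp only [List.mem_cons, List.not_mem_nil, or_false, forall_eq_or_imp, forall_eq]
  exact ⟨(compat_pair_starTree hab hac).mono (looseC_tripleTree_subset_starTree hab hac hbc),
    compat_pair_tripleTree hab hac⟩
end
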